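/- arXiv:math/0202234 — 5 statements merged into one kernel-verified Lean document; each statement's English description precedes it below -/
import Mathlib

section
/- Let B_r = {ξ ∈ ℂ : |ξ| < r} and let f be analytic on the universal covering of B_r \ {0}. If for every circle C centered at 0 and contained in B_r \ {0}, and for every function g analytic in B_r, the integral ∮_C f(ξ) g(ξ) dξ = 0, then f is single-valued and extends to a function analytic on all of B_r. -/
/-!
Testing against `g = 1` gives `∫₀^{2π} F(x + iy) e^{x + iy} dy = 0` for every `x < log r`.
Cauchy's theorem on the rectangles `[a, b] × [0, 2π]` turns this into `F(x + 2πi) = F(x)` for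
real `x`, hence on the whole half-plane by the identity theorem, so `f(w) = F(log w)` is a
well-defined analytic function on the punctured disc. Testing against `g = z ^ n` says that all
its moments `∮ z ^ n f(z) dz` vanish. Expanding `1 / (z - w)` in powers of `z / w`, the inner
integral of the Cauchy formula on an annulus `ρ < |z| < R` therefore vanishes, so near `0` the
function `f` agrees with its Cauchy integral over `|z| = R`, which is analytic at `0`.
-/

open Metric Real

open Complex Set Filter Topology intervalIntegral Function

theorem eqOn_zero_of_forall_intervalIntegral_eq_zero {E : Type*} [NormedAddCommGroup E]
    [NormedSpace ℝ E] [CompleteSpace E] {c : ℝ} {φ : ℝ → E} (hφ : ContinuousOn φ (Iio c))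
    (h : ∀ a < c, ∀ b < c, ∫ x in a..b, φ x = 0) : EqOn φ 0 (Iio c) := by
  intro x hx
  have hx' : x - 1 < c := by linarith [show x < c from hx]
  have hzero : HasDerivAt (fun b => ∫ t in (x - 1)..b, φ t) 0 x :=
    (hasDerivAt_const x 0).congr_of_eventuallyEq <|
      eventually_of_mem (Iio_mem_nhds hx) fun b hb => h _ hx' b hb
  have hφx : HasDerivAt (fun b => ∫ t in (x - 1)..b, φ t) (φ x) x :=
    integral_hasDerivAt_right
      ((hφ.mono fun t ht => ?_).intervalIntegrable)
      (hφ.stronglyMeasurableAtFilter isOpen_Iio x hx) (hφ.continuousAt (Iio_mem_nhds hx))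
  · exact hφx.unique hzero
  · exact ht.2.trans_lt (max_lt hx' hx)

variable {E : Type*} [NormedAddCommGroup E] [NormedSpace ℂ E]

theorem AnalyticOnNhd.eqOn_zero_of_forall_ofReal {G : ℂ → E} {U : Set ℂ}
    (hG : AnalyticOnNhd ℂ G U) (hUo : IsOpen U) (hUc : IsPreconnected U) {x₀ : ℝ}
    (hx₀ : (x₀ : ℂ) ∈ U) (h : ∀ x : ℝ, (x : ℂ) ∈ U → G x = 0) : EqOn G 0 U := by
  refine hG.eqOn_zero_of_preconnected_of_frequently_eq_zero hUc hx₀ ?_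
  have hlim : Tendsto ((↑) : ℝ → ℂ) (𝓝[≠] x₀) (𝓝[≠] (x₀ : ℂ)) :=
    tendsto_nhdsWithin_of_tendsto_nhds_of_eventually_within _
      continuous_ofReal.continuousWithinAt.tendsto
      (eventually_nhdsWithin_of_forall fun x hx => ofReal_injective.ne hx)
  refine hlim.frequently (Eventually.frequently ?_)
  have hU : ∀ᶠ x : ℝ in 𝓝 x₀, (x : ℂ) ∈ U :=
    continuous_ofReal.continuousAt.preimage_mem_nhds (hUo.mem_nhds hx₀)
  exact (hU.filter_mono nhdsWithin_le_nhds).mono h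

section Strip

variable {c : ℝ}

theorem integral_sub_add_two_pi_I_eq_zero {H : ℂ → E} (hH : DifferentiableOn ℂ H {z | z.re < c})
    (hvert : ∀ x < c, ∫ y in (0 : ℝ)..2 * π, H (x + y * I) = 0) {a b : ℝ} (ha : a < c)
    (hb : b < c) :
    ∫ x in a..b, (H x - H (x + 2 * π * I)) = 0 := by
  have hsub : uIcc a b ×ℂ uIcc 0 (2 * π) ⊆ {z : ℂ | z.re < c} := fun z hz =>
    hz.1.2.trans_lt (max_lt ha hb)
  have hint : ∀ y : ℝ, IntervalIntegrable (fun x : ℝ => H (x + y * I)) MeasureTheory.volume a b :=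
    fun y => ContinuousOn.intervalIntegrable <| hH.continuousOn.comp (by fun_prop)
      fun x hx => show ((x : ℂ) + y * I).re < c by simpa using hx.2.trans_lt (max_lt ha hb)
  have hrect := integral_boundary_rect_eq_zero_of_differentiableOn H a (b + 2 * π * I)
    (hH.mono (by simpa using hsub))
  simp only [ofReal_re, ofReal_im, add_re, add_im, mul_re, mul_im, ofReal_zero, zero_mul,
    add_zero, I_re, I_im, mul_zero, mul_one, sub_zero, re_ofNat, im_ofNat, zero_add] at hrect
  rw [hvert b hb, hvert a ha, smul_zero, add_zero, sub_zero, ← integral_sub] at hrect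
  · simpa using hrect
  · simpa using hint 0
  · simpa using hint (2 * π)

variable {F : ℂ → ℂ}

theorem add_two_pi_I_eq_of_forall_ofReal (hF : AnalyticOnNhd ℂ F {z | z.re < c})
    (hreal : ∀ x : ℝ, x < c → F (x + 2 * π * I) = F x) {z : ℂ} (hz : z.re < c) :
    F (z + 2 * π * I) = F z := by
  have hshift : AnalyticOnNhd ℂ (fun z => F (z + 2 * π * I) - F z) {z | z.re < c} :=
    fun z hz => ((hF _ (by simpa using hz)).comp (analyticAt_id.add analyticAt_const)).sub (hF z hz)
  have hzero := hshift.eqOn_zero_of_forall_ofReal (isOpen_lt continuous_re continuous_const)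
    (convex_halfSpace_re_lt c).isPreconnected (x₀ := c - 1) (by simp)
    (fun x hx => sub_eq_zero.2 (hreal x (by simpa using hx)))
  exact sub_eq_zero.1 (hzero hz)

theorem add_two_pi_I_eq_of_integral_mul_exp_eq_zero (hF : AnalyticOnNhd ℂ F {z | z.re < c})
    (hvert : ∀ x < c, ∫ y in (0 : ℝ)..2 * π, F (x + y * I) * exp (x + y * I) = 0) {z : ℂ}
    (hz : z.re < c) : F (z + 2 * π * I) = F z := by
  refine add_two_pi_I_eq_of_forall_ofReal hF (fun x hx => ?_) hz
  set H : ℂ → ℂ := fun z => F z * exp z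
  have hH : DifferentiableOn ℂ H {z | z.re < c} :=
    hF.differentiableOn.mul differentiable_exp.differentiableOn
  have hcont : ContinuousOn (fun x : ℝ => H x - H (x + 2 * π * I)) (Iio c) :=
    (hH.continuousOn.comp (by fun_prop) fun x hx => by simpa using hx).sub
      (hH.continuousOn.comp (by fun_prop) fun x hx => by simpa using hx)
  have hHx := eqOn_zero_of_forall_intervalIntegral_eq_zero hcont
    (fun a ha b hb => integral_sub_add_two_pi_I_eq_zero hH hvert ha hb) (show x ∈ Iio c from hx)
  rw [Pi.zero_apply, sub_eq_zero] at hHx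
  simp only [H, Complex.exp_add, exp_two_pi_mul_I, mul_one] at hHx
  exact (mul_right_cancel₀ (Complex.exp_ne_zero x) hHx).symm

theorem add_int_mul_two_pi_I_eq (hper : ∀ z : ℂ, z.re < c → F (z + 2 * π * I) = F z)
    {z : ℂ} (hz : z.re < c) (n : ℤ) : F (z + n * (2 * π * I)) = F z := by
  have hnat : ∀ z : ℂ, z.re < c → ∀ n : ℕ, F (z + n * (2 * π * I)) = F z := by
    intro z hz n
    induction n with
    | zero => simp
    | succ n ih =>
      rw [← ih, ← hper (z + n * (2 * π * I)) (by simpa using hz)]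
      congr 1
      push_cast
      ring
  obtain ⟨n, rfl | rfl⟩ := n.eq_nat_or_neg
  · exact_mod_cast hnat z hz n
  · simpa [sub_eq_add_neg] using (hnat (z - n * (2 * π * I)) (by simpa using hz) n).symm

theorem eq_of_exp_eq (hper : ∀ z : ℂ, z.re < c → F (z + 2 * π * I) = F z) {a b : ℂ}
    (ha : a.re < c) (hab : exp a = exp b) : F a = F b := by
  obtain ⟨n, rfl⟩ := exp_eq_exp_iff_exists_int.1 hab.symm
  exact (add_int_mul_two_pi_I_eq hper ha n).symm

theorem analyticAt_comp_log (hF : AnalyticOnNhd ℂ F {z | z.re < c})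
    (hper : ∀ z : ℂ, z.re < c → F (z + 2 * π * I) = F z) {w : ℂ} (hw : w ≠ 0)
    (hwc : Real.log ‖w‖ < c) : AnalyticAt ℂ (fun v => F (Complex.log v)) w := by
  -- A branch of the logarithm near `w` that is analytic even when `w` lies on the cut of `log`.
  set branch : ℂ → ℂ := fun v => log (v / w) + log w
  have hbranch : AnalyticAt ℂ branch w := by
    refine (analyticAt_clog ?_).comp (analyticAt_id.div_const) |>.add analyticAt_const
    simp [div_self hw]
  have hbw : branch w ∈ {z : ℂ | z.re < c} := by simpa [branch, div_self hw, log_re] using hwc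
  refine ((hF _ hbw).comp hbranch).congr ?_
  filter_upwards [hbranch.continuousAt.preimage_mem_nhds
    ((isOpen_lt continuous_re continuous_const).mem_nhds hbw), eventually_ne_nhds hw] with v hv hv0
  refine eq_of_exp_eq hper hv ?_
  rw [Complex.exp_add, exp_log (div_ne_zero hv0 hw), exp_log hw, exp_log hv0, div_mul_cancel₀ _ hw]

theorem circleIntegral_smul_comp_log (hper : ∀ z : ℂ, z.re < c → F (z + 2 * π * I) = F z)
    {ρ : ℝ} (hρ : 0 < ρ) (hρc : Real.log ρ < c) (g : ℂ → ℂ) :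
    ∮ z in C(0, ρ), g z • F (Complex.log z) =
      ∫ θ in (0 : ℝ)..2 * π,
        F (Real.log ρ + θ * I) * g (ρ * exp (θ * I)) * (ρ * exp (θ * I) * I) := by
  refine integral_congr fun θ _ => ?_
  have hlog : F (Complex.log (circleMap 0 ρ θ)) = F (Real.log ρ + θ * I) := by
    refine (eq_of_exp_eq hper (by simpa using hρc) ?_).symm
    rw [exp_log (circleMap_ne_center hρ.ne'), Complex.exp_add, ← ofReal_exp, Real.exp_log hρ]
    simp [circleMap]
  simp only [deriv_circleMap, smul_eq_mul, hlog]
  simp only [circleMap, zero_add]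
  ring

end Strip

section Annulus

variable {f : ℂ → E} {c w : ℂ} {ρ : ℝ}

theorem sub_ne_zero_of_mem_sphere {z : ℂ} {s : ℝ} (hz : z ∈ sphere c s) (hs : s ≠ ‖w - c‖) :
    z - w ≠ 0 := fun h => by
  rw [mem_sphere_iff_norm, sub_eq_zero.1 h] at hz
  exact hs hz.symm

theorem circleIntegral_sub_inv_eq_zero_of_lt_norm (hρ : 0 ≤ ρ) (hw : ρ < ‖w - c‖) :
    ∮ z in C(c, ρ), (z - w)⁻¹ = 0 := by
  refine DiffContOnCl.circleIntegral_eq_zero hρ <|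
    ((differentiableOn_id.sub_const w).inv fun z hz => sub_ne_zero.2 hz).diffContOnCl_ball
      fun z hz (hzw : z = w) => ?_
  rw [mem_closedBall_iff_norm, hzw] at hz
  exact hz.not_gt hw

theorem circleIntegral_dslope [CompleteSpace E] {s : ℝ} (hs : 0 ≤ s) (hsw : s ≠ ‖w - c‖)
    (hf : ContinuousOn f (sphere c s)) :
    ∮ z in C(c, s), dslope f w z =
      (∮ z in C(c, s), (z - w)⁻¹ • f z) - (∮ z in C(c, s), (z - w)⁻¹) • f w := by
  have hne : ∀ z ∈ sphere c s, z - w ≠ 0 := fun z hz => sub_ne_zero_of_mem_sphere hz hsw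
  have hinv : ContinuousOn (fun z => (z - w)⁻¹) (sphere c s) :=
    (continuousOn_id.sub continuousOn_const).inv₀ hne
  rw [← circleIntegral.integral_smul_const, ← circleIntegral.integral_sub
    (f := fun z => (z - w)⁻¹ • f z) (g := fun z => (z - w)⁻¹ • f w)
    ((hinv.smul hf).circleIntegrable hs) ((hinv.smul continuousOn_const).circleIntegrable hs)]
  refine circleIntegral.integral_congr hs fun z hz => ?_
  rw [dslope_of_ne _ (sub_ne_zero.1 (hne z hz)), slope_def_module, smul_sub]

theorem circleIntegral_sub_inv_smul_sub_of_differentiable_on_annulus [CompleteSpace E] {R : ℝ}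
    (hρ : 0 < ρ) (hρw : ρ < ‖w - c‖) (hwR : ‖w - c‖ < R)
    (hc : ContinuousOn f (closedBall c R \ ball c ρ))
    (hd : DifferentiableOn ℂ f (ball c R \ closedBall c ρ)) :
    (∮ z in C(c, R), (z - w)⁻¹ • f z) - (∮ z in C(c, ρ), (z - w)⁻¹ • f z) =
      (2 * π * I : ℂ) • f w := by
  have hopen : IsOpen (ball c R \ closedBall c ρ) := isOpen_ball.sdiff isClosed_closedBall
  have hdiff : ∀ z ∈ ball c R \ closedBall c ρ, DifferentiableAt ℂ f z := fun z hz =>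
    hd.differentiableAt (hopen.mem_nhds hz)
  have hwA : w ∈ ball c R \ closedBall c ρ := by simp [dist_eq_norm, hwR, hρw]
  have hslope : ∮ z in C(c, R), dslope f w z = ∮ z in C(c, ρ), dslope f w z := by
    refine circleIntegral_eq_of_differentiable_on_annulus_off_countable hρ (hρw.le.trans hwR.le)
      (countable_singleton w) (fun z hz => ?_) fun z hz =>
        (differentiableAt_dslope_of_ne hz.2).2 (hdiff z hz.1)
    rcases eq_or_ne z w with rfl | hzw
    · exact (continuousAt_dslope_same.2 (hdiff z hwA)).continuousWithinAt
    · exact (continuousWithinAt_dslope_of_ne hzw).2 (hc z hz)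
  have hsphere : ∀ s, ρ ≤ s → s ≤ R → sphere c s ⊆ closedBall c R \ ball c ρ :=
    fun s h₁ h₂ z hz => by
    rw [mem_sphere_iff_norm] at hz
    simp [dist_eq_norm, hz, h₁, h₂]
  rw [circleIntegral_dslope (hρ.trans (hρw.trans hwR)).le hwR.ne'
      (hc.mono (hsphere R (hρw.trans hwR).le le_rfl)),
    circleIntegral_dslope hρ.le hρw.ne (hc.mono (hsphere ρ le_rfl (hρw.trans hwR).le)),
    circleIntegral.integral_sub_inv_of_mem_ball (by simpa [dist_eq_norm] using hwR),
    circleIntegral_sub_inv_eq_zero_of_lt_norm hρ.le hρw, zero_smul, sub_zero] at hslope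
  rw [← hslope, sub_sub_cancel]

theorem circleIntegral_sub_inv_smul_eq_zero_of_forall_pow_smul (hρ : 0 ≤ ρ)
    (hw : ρ < ‖w - c‖) (hf : ContinuousOn f (sphere c ρ))
    (hmom : ∀ n : ℕ, ∮ z in C(c, ρ), (z - c) ^ n • f z = 0) :
    ∮ z in C(c, ρ), (z - w)⁻¹ • f z = 0 := by
  have hwc : w - c ≠ 0 := norm_pos_iff.1 (hρ.trans_lt hw)
  have hzw : ∀ z ∈ sphere c ρ, z - w ≠ 0 := fun z hz => sub_ne_zero_of_mem_sphere hz hw.ne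
  -- The moment conditions make `J N` independent of `N`, while it decays geometrically.
  set J : ℕ → E := fun N => ∮ z in C(c, ρ), (((z - c) / (w - c)) ^ N * (z - w)⁻¹) • f z
  have hJint : ∀ N, CircleIntegrable (fun z => (((z - c) / (w - c)) ^ N * (z - w)⁻¹) • f z) c ρ :=
    fun N => (((by fun_prop : Continuous fun z => ((z - c) / (w - c)) ^ N).continuousOn.mul
      ((continuousOn_id.sub continuousOn_const).inv₀ hzw)).smul hf).circleIntegrable hρ
  have hJsucc : ∀ N, J (N + 1) = J N := fun N => by
    rw [← sub_eq_zero, ← circleIntegral.integral_sub (hJint _) (hJint _)]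
    calc (∮ z in C(c, ρ), ((((z - c) / (w - c)) ^ (N + 1) * (z - w)⁻¹) • f z -
            (((z - c) / (w - c)) ^ N * (z - w)⁻¹) • f z))
        = ∮ z in C(c, ρ), ((w - c) ^ (N + 1))⁻¹ • (z - c) ^ N • f z :=
          circleIntegral.integral_congr hρ fun z hz => by
            rw [← sub_smul, smul_smul]
            congr 1
            rw [div_pow, div_pow, pow_succ, pow_succ]
            field_simp [hzw z hz, hwc]
            ring
      _ = 0 := by rw [circleIntegral.integral_smul, hmom, smul_zero]
  obtain ⟨M, hM⟩ := (isCompact_sphere c ρ).exists_bound_of_continuousOn hf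
  have hbound : ∀ N : ℕ, ‖J 0‖ ≤ 2 * π * ρ * (M / (‖w - c‖ - ρ)) * (ρ / ‖w - c‖) ^ N := by
    intro N
    have hJN : J N = J 0 := by
      induction N with
      | zero => rfl
      | succ N ih => rw [hJsucc, ih]
    rw [← hJN, mul_assoc _ (M / _)]
    refine circleIntegral.norm_integral_le_of_norm_le_const hρ fun z hz => ?_
    have hz' : ‖z - c‖ = ρ := mem_sphere_iff_norm.1 hz
    have hzw' : ‖w - c‖ - ρ ≤ ‖z - w‖ := by
      simpa [hz', norm_sub_rev z w] using norm_sub_norm_le (w - c) (z - c)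
    rw [norm_smul, norm_mul, norm_pow, norm_div, hz', norm_inv]
    calc (ρ / ‖w - c‖) ^ N * ‖z - w‖⁻¹ * ‖f z‖ ≤ (ρ / ‖w - c‖) ^ N * (‖w - c‖ - ρ)⁻¹ * M := by
          gcongr
          exact hM z hz
      _ = M / (‖w - c‖ - ρ) * (ρ / ‖w - c‖) ^ N := by ring
  have hlim : Tendsto (fun N : ℕ => 2 * π * ρ * (M / (‖w - c‖ - ρ)) * (ρ / ‖w - c‖) ^ N)
      atTop (𝓝 0) := by
    simpa using (tendsto_pow_atTop_nhds_zero_of_lt_one (by positivity)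
      ((div_lt_one (hρ.trans_lt hw)).2 hw)).const_mul (2 * π * ρ * (M / (‖w - c‖ - ρ)))
  simpa [J] using norm_le_zero_iff.1 (ge_of_tendsto' hlim hbound)

theorem exists_analyticOnNhd_update_of_circleIntegral_pow_smul_eq_zero [CompleteSpace E] {r : ℝ}
    (hf : DifferentiableOn ℂ f (ball c r \ {c}))
    (hmom : ∀ ρ, 0 < ρ → ρ < r → ∀ n : ℕ, ∮ z in C(c, ρ), (z - c) ^ n • f z = 0) :
    ∃ a : E, AnalyticOnNhd ℂ (update f c a) (ball c r) := by
  have hannulus : ∀ s t, 0 < s → t < r → closedBall c t \ ball c s ⊆ ball c r \ {c} :=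
    fun s t hs htr z ⟨hzt, hzs⟩ => ⟨closedBall_subset_ball htr hzt, fun hzc : z = c =>
      hzs (hzc ▸ mem_ball_self hs)⟩
  have hsphere : ∀ s, 0 < s → s < r → sphere c s ⊆ ball c r \ {c} := fun s hs hsr =>
    closedBall_sdiff_ball.symm.subset.trans (hannulus s s hs hsr)
  set R := r / 2 with hR
  set T : ℂ → E := fun w => (2 * π * I : ℂ)⁻¹ • ∮ z in C(c, R), (z - w)⁻¹ • f z
  have hT : ∀ w ∈ ball c R \ {c}, T w = f w := by
    rintro w ⟨hwR, hwc : w ≠ c⟩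
    rw [mem_ball_iff_norm] at hwR
    have hw0 : 0 < ‖w - c‖ := norm_pos_iff.2 (sub_ne_zero.2 hwc)
    have hcauchy := circleIntegral_sub_inv_smul_sub_of_differentiable_on_annulus
      (half_pos hw0) (half_lt_self hw0) hwR
      (hf.continuousOn.mono (hannulus _ R (half_pos hw0) (by linarith)))
      (hf.mono ((sdiff_subset_sdiff ball_subset_closedBall ball_subset_closedBall).trans
        (hannulus _ R (half_pos hw0) (by linarith))))
    rw [circleIntegral_sub_inv_smul_eq_zero_of_forall_pow_smul (half_pos hw0).le (half_lt_self hw0)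
      (hf.continuousOn.mono (hsphere _ (half_pos hw0) (by linarith)))
      (hmom _ (half_pos hw0) (by linarith)), sub_zero] at hcauchy
    simp only [T, hcauchy, smul_smul, inv_mul_cancel₀ two_pi_I_ne_zero, one_smul]
  refine ⟨T c, fun w hw => ?_⟩
  have hr : 0 < r := pos_of_mem_ball hw
  have hR0 : 0 < R := by positivity
  rcases eq_or_ne c w with rfl | hwc
  · have hfR : CircleIntegrable f c R := (hf.continuousOn.mono fun z hz =>
      hsphere R hR0 (by linarith) hz).circleIntegrable hR0.le
    have hTan : AnalyticAt ℂ T c :=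
      (hasFPowerSeriesOn_cauchy_integral (R := ⟨R, hR0.le⟩) hfR (NNReal.coe_pos.1 hR0)).analyticAt
    refine hTan.congr ?_
    filter_upwards [ball_mem_nhds c hR0] with v hv
    rcases eq_or_ne v c with rfl | hvc
    · simp
    · rw [update_of_ne hvc, hT v ⟨hv, hvc⟩]
  · refine (hf.analyticOnNhd (isOpen_ball.sdiff isClosed_singleton) w ⟨hw, hwc.symm⟩).congr ?_
    filter_upwards [eventually_ne_nhds hwc.symm] with v hv
    rw [update_of_ne hv]

end Annulus

/-- The universal covering of `B_r \ {0}` is modelled by the half-plane `{z | exp (re z) < r}` with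
covering map `exp`; the branches of `f` are the values of `F`. -/
theorem stmt_1 (r : ℝ) (hr : 0 < r) (F : ℂ → ℂ)
    (hF : AnalyticOnNhd ℂ F {z : ℂ | Real.exp z.re < r})
    (hint : ∀ ρ : ℝ, 0 < ρ → ρ < r → ∀ g : ℂ → ℂ, AnalyticOnNhd ℂ g (Metric.ball 0 r) →
      (∫ θ in (0:ℝ)..(2 * Real.pi),
          F ((Real.log ρ : ℂ) + (θ : ℂ) * Complex.I) *
            g ((ρ : ℂ) * Complex.exp ((θ : ℂ) * Complex.I)) *
            ((ρ : ℂ) * Complex.exp ((θ : ℂ) * Complex.I) * Complex.I)) = 0) :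
    ∃ ftilde : ℂ → ℂ, AnalyticOnNhd ℂ ftilde (Metric.ball 0 r) ∧
      ∀ z : ℂ, Real.exp z.re < r → F z = ftilde (Complex.exp z) := by
  have hstrip : {z : ℂ | Real.exp z.re < r} = {z : ℂ | z.re < Real.log r} := by
    ext z
    simp [Real.lt_log_iff_exp_lt hr]
  rw [hstrip] at hF
  have hvert : ∀ x < Real.log r, ∫ y in (0 : ℝ)..2 * π, F (x + y * I) * exp (x + y * I) = 0 := by
    intro x hx
    have h := hint (Real.exp x) (Real.exp_pos x) ((Real.lt_log_iff_exp_lt hr).1 hx) 1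
      analyticOnNhd_const
    simp only [Real.log_exp, Pi.one_apply, mul_one, ofReal_exp, ← Complex.exp_add,
      ← mul_assoc, integral_mul_const, mul_eq_zero, I_ne_zero, or_false] at h
    exact h
  have hper : ∀ z : ℂ, z.re < Real.log r → F (z + 2 * π * I) = F z := fun _ =>
    add_two_pi_I_eq_of_integral_mul_exp_eq_zero hF hvert
  have hlog : ∀ w ∈ ball (0 : ℂ) r \ {0}, Real.log ‖w‖ < Real.log r := fun w hw =>
    Real.log_lt_log (norm_pos_iff.2 hw.2) (mem_ball_zero_iff.1 hw.1)
  obtain ⟨a, ha⟩ := exists_analyticOnNhd_update_of_circleIntegral_pow_smul_eq_zero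
    (f := fun w => F (Complex.log w))
    (fun w hw =>
      (analyticAt_comp_log hF hper hw.2 (hlog w hw)).differentiableAt.differentiableWithinAt)
    fun ρ hρ hρr n => by
      simpa only [sub_zero] using
        (circleIntegral_smul_comp_log hper hρ (Real.log_lt_log hρ hρr) (· ^ n)).trans
          (hint ρ hρ hρr (· ^ n) fun z _ => analyticAt_id.pow n)
  refine ⟨update (fun w => F (Complex.log w)) 0 a, ha, fun z hz => ?_⟩
  rw [update_of_ne (Complex.exp_ne_zero z)]
  exact eq_of_exp_eq hper (by simpa [Real.lt_log_iff_exp_lt hr] using hz)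
    (exp_log (Complex.exp_ne_zero z)).symm
end

section
/- Suppose m ≤ A (with A > 0 real, m a positive integer). Then ∑_{k=1}^m k!/A^k ≤ 3/A, provided A ≥ 2. -/
open Finset

lemma fact_le_aux (A : ℝ) (j : ℕ) (hj : ((j : ℝ) + 2) ≤ A) :
    (Nat.factorial (j + 2) : ℝ) ≤ 2 * A ^ j := by
  induction j with
  | zero => simp [Nat.factorial]
  | succ n ih =>
    have hn : ((n : ℝ) + 2) ≤ A := by push_cast at hj ⊢; linarith
    have hA0 : (0 : ℝ) ≤ A := by linarith
    have h1 : (Nat.factorial (n + 3) : ℝ) = ((n : ℝ) + 3) * Nat.factorial (n + 2) := by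
      rw [show n + 3 = (n + 2) + 1 from rfl, Nat.factorial_succ]
      push_cast; ring
    have h2 : ((n : ℝ) + 3) ≤ A := by push_cast at hj; linarith
    calc (Nat.factorial (n + 1 + 2) : ℝ) = ((n : ℝ) + 3) * Nat.factorial (n + 2) := by
          rw [show n + 1 + 2 = n + 3 from rfl, h1]
      _ ≤ A * (2 * A ^ n) := by
          apply mul_le_mul h2 (ih hn) (by positivity) hA0
      _ = 2 * A ^ (n + 1) := by ring

theorem stmt_5 (A : ℝ) (hA : 2 ≤ A) (m : ℕ) (hm : 0 < m) (hmA : (m : ℝ) ≤ A) :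
    ∑ k ∈ Finset.Icc 1 m, (Nat.factorial k : ℝ) / A ^ k ≤ 3 / A := by
  have hA0 : (0 : ℝ) < A := by linarith
  have hterm : ∀ k ∈ Finset.Icc 2 m, (Nat.factorial k : ℝ) / A ^ k ≤ 2 / A ^ 2 := by
    intro k hk
    simp only [Finset.mem_Icc] at hk
    obtain ⟨h2k, hkm⟩ := hk
    obtain ⟨j, rfl⟩ := Nat.exists_eq_add_of_le h2k
    have hjA : ((j : ℝ) + 2) ≤ A := by
      have : ((2 + j : ℕ) : ℝ) ≤ A := le_trans (by exact_mod_cast hkm) hmA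
      push_cast at this; linarith
    have hfact := fact_le_aux A j hjA
    rw [div_le_div_iff₀ (by positivity) (by positivity)]
    calc (Nat.factorial (2 + j) : ℝ) * A ^ 2 ≤ 2 * A ^ j * A ^ 2 := by
          rw [show 2 + j = j + 2 from by ring]
          exact mul_le_mul_of_nonneg_right hfact (by positivity)
      _ = 2 * A ^ (2 + j) := by rw [add_comm 2 j, pow_add]; ring
  have hsplit : Finset.Icc 1 m = insert 1 (Finset.Icc 2 m) := by
    ext x; simp [Finset.mem_Icc, Finset.mem_insert]; omega
  rw [hsplit, Finset.sum_insert (by simp)]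
  have hsum : ∑ k ∈ Finset.Icc 2 m, (Nat.factorial k : ℝ) / A ^ k
      ≤ (Finset.Icc 2 m).card • (2 / A ^ 2) := Finset.sum_le_card_nsmul _ _ _ hterm
  have hcard : ((Finset.Icc 2 m).card : ℝ) ≤ A := by
    rw [Nat.card_Icc]
    have : ((m + 1 - 2 : ℕ) : ℝ) ≤ (m : ℝ) := by
      have := Nat.sub_le (m + 1) 2
      exact_mod_cast le_trans (Nat.cast_le.mpr (by omega)) (le_refl (m:ℝ))
    linarith
  have h2 : ((Finset.Icc 2 m).card : ℝ) * (2 / A ^ 2) ≤ 2 / A := by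
    rw [show ((Finset.Icc 2 m).card : ℝ) * (2 / A ^ 2) = 2 * (Finset.Icc 2 m).card / A ^ 2 from by ring,
      div_le_div_iff₀ (by positivity) (by positivity)]
    nlinarith [(Nat.cast_nonneg (Finset.Icc 2 m).card : (0:ℝ) ≤ _)]
  simp only [Nat.factorial_one, Nat.cast_one, pow_one, nsmul_eq_mul] at *
  have h13 : 1 / A + 2 / A = 3 / A := by ring
  linarith
end

section
/- Let h be a function analytic in a neighborhood of the closed disk {|ξ| ≤ R} (R > 0) satisfying the integral equation h(ξ)² = 1 + d₁ ξ² + d₂ ξ + ∫₀^ξ (d₃ s + d₄) h(s) ds + 2λ ∫₀^ξ (h(s) - 1) s^{-1} ds, with h(0) = 1, where d₁,...,d₄, λ ∈ ℂ. Then there exist constants C₅, C₆ (depending only on d₁,...,d₄, λ) such that M_R := sup_{|ξ| ≤ R} |h(ξ)| ≤ C₅ R² + C₆. -/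
/-!
Let `M` be the maximum of `‖h‖` on the closed disk, attained at `ξ₀`. The Schwarz lemma bounds
the difference quotient `(h s - 1) / s` by `(M + 1) / R`, so the singular integral is at most
`M + 1`. Estimating the integral equation at `ξ₀` then gives `M ^ 2 ≤ A + B * M` with `A` and `B`
of order `R ^ 2 + 1`, and since `M ≥ ‖h 0‖ = 1` this forces `M ≤ A + B`.
-/

open Metric Set intervalIntegral

lemma norm_ofReal_mul_le_of_mem_uIoc {t R : ℝ} {ξ : ℂ} (ht : t ∈ uIoc 0 1) (hξ : ‖ξ‖ ≤ R) :
    ‖(t : ℂ) * ξ‖ ≤ R := by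
  rw [uIoc_of_le zero_le_one] at ht
  rw [norm_mul, Complex.norm_real, Real.norm_of_nonneg ht.1.le]
  exact (mul_le_of_le_one_left (norm_nonneg ξ) ht.2).trans hξ

lemma norm_dslope_le_of_norm_le {E : Type*} [NormedAddCommGroup E] [NormedSpace ℂ E]
    {f : ℂ → E} {R M : ℝ} {z : ℂ} (hR : 0 < R) (hf : DifferentiableOn ℂ f (closedBall 0 R))
    (hM : ∀ w ∈ closedBall 0 R, ‖f w‖ ≤ M) (hz : z ∈ closedBall 0 R) :
    ‖dslope f 0 z‖ ≤ (M + ‖f 0‖) / R := by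
  have hmaps : MapsTo f (ball 0 R) (closedBall (f 0) (M + ‖f 0‖)) := fun w hw =>
    mem_closedBall_iff_norm.2 <|
      (norm_sub_le _ _).trans (add_le_add_left (hM w (ball_subset_closedBall hw)) _)
  have hcont : ContinuousOn (dslope f 0) (closedBall 0 R) :=
    (continuousOn_dslope (closedBall_mem_nhds 0 hR)).2
      ⟨hf.continuousOn, hf.differentiableAt (closedBall_mem_nhds 0 hR)⟩
  rw [← closure_ball 0 hR.ne'] at hz hcont
  exact ContinuousWithinAt.closure_le hz ((hcont _ hz).norm.mono subset_closure)
    continuousWithinAt_const fun w hw =>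
      Complex.norm_dslope_le_div_of_mapsTo_ball (hf.mono ball_subset_closedBall) hmaps hw

lemma sub_div_ofReal_eq_mul_dslope (f : ℂ → ℂ) (ξ : ℂ) {t : ℝ} (ht : t ≠ 0) :
    (f (t * ξ) - f 0) / t = ξ * dslope f 0 (t * ξ) := by
  rcases eq_or_ne ξ 0 with rfl | hξ
  · simp
  have htξ : (t : ℂ) * ξ ≠ 0 := mul_ne_zero (Complex.ofReal_ne_zero.2 ht) hξ
  rw [dslope_of_ne _ htξ, slope_def_field, sub_zero]
  field_simp

lemma norm_integral_sub_div_le {f : ℂ → ℂ} {R M : ℝ} {ξ : ℂ} (hR : 0 < R)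
    (hf : DifferentiableOn ℂ f (closedBall 0 R)) (hM : ∀ w ∈ closedBall 0 R, ‖f w‖ ≤ M)
    (hξ : ‖ξ‖ ≤ R) :
    ‖∫ t in (0:ℝ)..1, (f ((t : ℂ) * ξ) - f 0) / (t : ℂ)‖ ≤ M + ‖f 0‖ := by
  have hbound : ∀ t ∈ uIoc (0:ℝ) 1, ‖(f ((t : ℂ) * ξ) - f 0) / (t : ℂ)‖ ≤ M + ‖f 0‖ := by
    intro t ht
    have ht0 : t ≠ 0 := ((uIoc_of_le (zero_le_one (α := ℝ)) ▸ ht).1).ne'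
    have hmem : (t : ℂ) * ξ ∈ closedBall 0 R :=
      mem_closedBall_zero_iff.2 (norm_ofReal_mul_le_of_mem_uIoc ht hξ)
    rw [sub_div_ofReal_eq_mul_dslope f ξ ht0, norm_mul]
    calc ‖ξ‖ * ‖dslope f 0 (t * ξ)‖ ≤ R * ((M + ‖f 0‖) / R) :=
          mul_le_mul hξ (norm_dslope_le_of_norm_le hR hf hM hmem) (norm_nonneg _) hR.le
      _ = M + ‖f 0‖ := mul_div_cancel₀ _ hR.ne'
  simpa using norm_integral_le_of_norm_le_const hbound

lemma norm_integral_affine_mul_add_const_le {f : ℂ → ℂ} {a b K ξ : ℂ} {R M : ℝ}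
    (hM : ∀ w ∈ closedBall 0 R, ‖f w‖ ≤ M) (hξ : ‖ξ‖ ≤ R) :
    ‖∫ t in (0:ℝ)..1, ((a * ((t : ℂ) * ξ) + b) * f ((t : ℂ) * ξ) + K)‖
      ≤ (‖a‖ * R + ‖b‖) * M + ‖K‖ := by
  have hbound : ∀ t ∈ uIoc (0:ℝ) 1,
      ‖(a * ((t : ℂ) * ξ) + b) * f ((t : ℂ) * ξ) + K‖ ≤ (‖a‖ * R + ‖b‖) * M + ‖K‖ := by
    intro t ht
    have htξ := norm_ofReal_mul_le_of_mem_uIoc ht hξ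
    have haffine : ‖a * ((t : ℂ) * ξ) + b‖ ≤ ‖a‖ * R + ‖b‖ :=
      norm_add_le_of_le ((norm_mul_le _ _).trans (by gcongr)) le_rfl
    exact norm_add_le_of_le
      (norm_mul_le_of_le haffine (hM _ (mem_closedBall_zero_iff.2 htξ))) le_rfl
  simpa using norm_integral_le_of_norm_le_const hbound

/-- The first `∫` extends to the end of the expression, so the `lam` term lies inside it and is
multiplied by `ξ`. -/
lemma sq_le_of_integral_equation {h : ℂ → ℂ} {d₁ d₂ d₃ d₄ lam ξ : ℂ} {R M : ℝ} (hR : 0 < R)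
    (hh : DifferentiableOn ℂ h (closedBall 0 R)) (h0 : h 0 = 1)
    (hM : ∀ w ∈ closedBall 0 R, ‖h w‖ ≤ M) (hξ : ‖ξ‖ ≤ R)
    (heq : (h ξ) ^ 2 = 1 + d₁ * ξ ^ 2 + d₂ * ξ
          + ξ * ∫ t in (0:ℝ)..1, (d₃ * ((t : ℂ) * ξ) + d₄) * h ((t : ℂ) * ξ)
          + 2 * lam * ∫ t in (0:ℝ)..1, (h ((t : ℂ) * ξ) - 1) / (t : ℂ)) :
    ‖h ξ‖ ^ 2 ≤ 1 + ‖d₁‖ * R ^ 2 + ‖d₂‖ * R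
      + R * ((‖d₃‖ * R + ‖d₄‖) * M + 2 * ‖lam‖ * (M + 1)) := by
  have hsingular := norm_integral_sub_div_le hR hh hM hξ
  rw [h0, norm_one] at hsingular
  have hlam : ‖2 * lam * ∫ t in (0:ℝ)..1, (h ((t : ℂ) * ξ) - 1) / (t : ℂ)‖
      ≤ 2 * ‖lam‖ * (M + 1) := by
    rw [norm_mul, norm_mul, Complex.norm_ofNat]
    gcongr
  have hregular := (norm_integral_affine_mul_add_const_le (f := h) (a := d₃) (b := d₄) hM hξ).trans
    (add_le_add le_rfl hlam)
  rw [← norm_pow, heq]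
  refine norm_add_le_of_le (norm_add_le_of_le (norm_add_le_of_le (by rw [norm_one]) ?_) ?_) ?_
  · rw [norm_mul, norm_pow]; gcongr
  · rw [norm_mul]; gcongr
  · rw [norm_mul]; exact mul_le_mul hξ hregular (norm_nonneg _) hR.le

lemma le_add_of_sq_le_add_mul {A B M : ℝ} (hA : 0 ≤ A) (hM : 1 ≤ M)
    (h : M ^ 2 ≤ A + B * M) : M ≤ A + B := by
  nlinarith

/-- The integrals `∫₀^ξ` along the segment from `0` to `ξ` are parametrized by
`s = t·ξ`, `t ∈ [0,1]`, so `∫₀^ξ f(s) ds = ξ ∫₀¹ f(tξ) dt` and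
`∫₀^ξ (h(s)-1)/s ds = ∫₀¹ (h(tξ)-1)/t dt`. -/
theorem stmt_6 (d₁ d₂ d₃ d₄ lam : ℂ) :
    ∃ C₅ C₆ : ℝ, ∀ R : ℝ, 0 < R → ∀ h : ℂ → ℂ,
      (∃ U : Set ℂ, IsOpen U ∧ Metric.closedBall (0:ℂ) R ⊆ U ∧ AnalyticOnNhd ℂ h U) →
      h 0 = 1 →
      (∀ ξ : ℂ, ‖ξ‖ ≤ R →
        (h ξ) ^ 2 = 1 + d₁ * ξ ^ 2 + d₂ * ξ
          + ξ * ∫ t in (0:ℝ)..1, (d₃ * ((t : ℂ) * ξ) + d₄) * h ((t : ℂ) * ξ)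
          + 2 * lam * ∫ t in (0:ℝ)..1, (h ((t : ℂ) * ξ) - 1) / (t : ℂ)) →
      ∀ ξ : ℂ, ‖ξ‖ ≤ R → ‖h ξ‖ ≤ C₅ * R ^ 2 + C₆ := by
  refine ⟨‖d₁‖ + ‖d₂‖ + ‖d₃‖ + ‖d₄‖ + 4 * ‖lam‖, 1 + ‖d₂‖ + ‖d₄‖ + 4 * ‖lam‖, ?_⟩
  rintro R hR h ⟨U, -, hU, hh⟩ h0 heq ξ hξ
  have hd : DifferentiableOn ℂ h (closedBall 0 R) := hh.differentiableOn.mono hU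
  obtain ⟨ξ₀, hξ₀, hmax⟩ := (isCompact_closedBall (0:ℂ) R).exists_isMaxOn
    (nonempty_closedBall.2 hR.le) hd.continuousOn.norm
  set M := ‖h ξ₀‖
  have hM : ∀ w ∈ closedBall 0 R, ‖h w‖ ≤ M := fun w hw => hmax hw
  have hM1 : 1 ≤ M := by simpa [h0] using hM 0 (mem_closedBall_self hR.le)
  have hξ₀R : ‖ξ₀‖ ≤ R := mem_closedBall_zero_iff.1 hξ₀
  have hquad : M ^ 2 ≤ (1 + ‖d₁‖ * R ^ 2 + ‖d₂‖ * R + 2 * ‖lam‖ * R)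
      + (R * (‖d₃‖ * R + ‖d₄‖) + 2 * ‖lam‖ * R) * M := by
    linarith [sq_le_of_integral_equation hR hd h0 hM hξ₀R (heq ξ₀ hξ₀R)]
  have hMle := le_add_of_sq_le_add_mul (by positivity) hM1 hquad
  have hR2 : R ≤ R ^ 2 + 1 := by nlinarith [sq_nonneg (R - 1)]
  calc ‖h ξ‖ ≤ M := hM ξ (mem_closedBall_zero_iff.2 hξ)
    _ ≤ _ := by
      nlinarith [mul_le_mul_of_nonneg_left hR2 (norm_nonneg d₂),
        mul_le_mul_of_nonneg_left hR2 (norm_nonneg d₄),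
        mul_le_mul_of_nonneg_left hR2 (norm_nonneg lam)]
end

section
/- The ODE ξ F₀'(ξ) = F₀(1 + 3F₀ + 3F₀²) with F₀ analytic at 0 and F₀'(0) = 1 has the implicit solution ξ = ξ₀ F₀ (F₀ + ω₀)^{-θ} (F₀ + \bar{ω₀})^{-\bar{θ}}, where ω₀ = 1/2 + i√3/6, θ = 1/2 + i√3/2, ξ₀ = 3^{-1/2} exp(−π√3/6). That is, any analytic function F₀ near 0 with F₀(ξ) = ξ + O(ξ²) solving this equation satisfies this algebraic relation where both sides are analytic. -/
/-!
Put `G w = w (w + ω)^(-θ) (w + ω̄)^(-θ̄)`. The partial fraction decomposition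
`1 / (w (1 + 3w + 3w²)) = 1/w - θ/(w + ω) - θ̄/(w + ω̄)` says that `G' = G / (w (1 + 3w + 3w²))`,
so the ODE for `F₀` turns `Φ = ξ₀ · G ∘ F₀` into a solution of the Euler equation `ξ Φ' = Φ`,
and `ξ₀` is exactly the constant making `Φ'(0) = 1`. Differentiating `ξ Φ' = Φ` `n` times at `0`
gives `(n - 1) Φ⁽ⁿ⁾(0) = 0`, so the Taylor series of `Φ` at `0` is `Φ'(0) ξ = ξ`.
-/

open Complex ComplexConjugate Filter Topology
open scoped Real

theorem mul_iteratedDeriv_succ_eventuallyEq {k : ℂ → ℂ} (hk : AnalyticAt ℂ k 0)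
    (hode : ∀ᶠ ξ in 𝓝 0, ξ * deriv k ξ = k ξ) (n : ℕ) :
    (fun ξ => ξ * iteratedDeriv (n + 1) k ξ) =ᶠ[𝓝 0] fun ξ => (1 - n) * iteratedDeriv n k ξ := by
  induction n with
  | zero => simpa [iteratedDeriv_one, EventuallyEq] using hode
  | succ n ih =>
    filter_upwards [ih.deriv, hk.eventually_analyticAt] with ξ hξ hkξ
    have hd : HasDerivAt (iteratedDeriv (n + 1) k) (iteratedDeriv (n + 1 + 1) k ξ) ξ := by
      rw [iteratedDeriv_succ (n := n + 1)]
      have han : AnalyticAt ℂ (iteratedDeriv (n + 1) k) ξ := by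
        rw [iteratedDeriv_eq_iterate]; exact hkξ.iterated_deriv (n + 1)
      exact han.differentiableAt.hasDerivAt
    rw [((hasDerivAt_id' ξ).fun_mul hd).deriv, deriv_const_mul_field', ← iteratedDeriv_succ] at hξ
    push_cast
    linear_combination hξ

theorem iteratedDeriv_eq_zero_of_mul_deriv_eq {k : ℂ → ℂ} (hk : AnalyticAt ℂ k 0)
    (hode : ∀ᶠ ξ in 𝓝 0, ξ * deriv k ξ = k ξ) {n : ℕ} (hn : n ≠ 1) :
    iteratedDeriv n k 0 = 0 := by
  have h := (mul_iteratedDeriv_succ_eventuallyEq hk hode n).eq_of_nhds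
  have hn' : (1 - n : ℂ) ≠ 0 := sub_ne_zero.mpr (mod_cast hn.symm)
  simpa [hn'] using h.symm

theorem eventually_eq_deriv_mul_of_mul_deriv_eq {k : ℂ → ℂ} (hk : AnalyticAt ℂ k 0)
    (hode : ∀ᶠ ξ in 𝓝 0, ξ * deriv k ξ = k ξ) :
    ∀ᶠ ξ in 𝓝 0, k ξ = deriv k 0 * ξ := by
  obtain ⟨r, hr, hkr⟩ := hk.exists_ball_analyticOnNhd
  filter_upwards [Metric.ball_mem_nhds 0 hr] with ξ hξ
  have hlinear := hasSum_single
    (f := fun n : ℕ ↦ (n.factorial : ℂ)⁻¹ • (ξ - 0) ^ n • iteratedDeriv n k 0) 1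
    fun n hn => by simp [iteratedDeriv_eq_zero_of_mul_deriv_eq hk hode hn]
  simpa [mul_comm] using (hasSum_taylorSeries_on_ball hkr.differentiableOn hξ).unique hlinear

namespace AbelImplicit

noncomputable def ω : ℂ := 1/2 + I * ((√3 / 6 : ℝ) : ℂ)
noncomputable def θ : ℂ := 1/2 + I * ((√3 / 2 : ℝ) : ℂ)
noncomputable def ξ₀ : ℂ := (((√3)⁻¹ : ℝ) : ℂ) * exp (-((π * √3 / 6 : ℝ) : ℂ))

lemma ofReal_sqrt_three_sq : ((√3 : ℝ) : ℂ) ^ 2 = 3 := by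
  rw [← ofReal_pow, Real.sq_sqrt (by norm_num)]; norm_num

lemma conj_ω : conj ω = 1 - ω := by
  simp only [ω, map_add, map_mul, conj_I, conj_ofReal, map_div₀, map_one, map_ofNat]; ring

lemma conj_θ : conj θ = 1 - θ := by
  simp only [θ, map_add, map_mul, conj_I, conj_ofReal, map_div₀, map_one, map_ofNat]; ring

lemma ω_mul_one_sub : ω * (1 - ω) = 1 / 3 := by
  simp only [ω]; push_cast
  linear_combination (1/36 : ℂ) * ofReal_sqrt_three_sq - ((√3 : ℂ) ^ 2 / 36) * I_sq

lemma θ_add_ω_sub_two_mul : θ + ω - 2 * (θ * ω) = 1 := by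
  simp only [ω, θ]; push_cast
  linear_combination (1/6 : ℂ) * ofReal_sqrt_three_sq - ((√3 : ℂ) ^ 2 / 6) * I_sq

lemma one_add_three_mul_add_three_mul_sq (w : ℂ) :
    1 + 3 * w + 3 * w ^ 2 = 3 * ((w + ω) * (w + conj ω)) := by
  rw [conj_ω]; linear_combination (-3 : ℂ) * ω_mul_one_sub

/-- `1 / (w (1 + 3w + 3w²)) = 1/w - θ/(w + ω) - θ̄/(w + ω̄)`, cleared of denominators. -/
lemma partial_fractions (w : ℂ) :
    (w + ω) * (w + conj ω) - θ * w * (w + conj ω) - conj θ * w * (w + ω) = 1 / 3 := by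
  rw [conj_ω, conj_θ]
  linear_combination ω_mul_one_sub - w * θ_add_ω_sub_two_mul

lemma log_ω : log ω = ((-(Real.log 3 / 2) : ℝ) : ℂ) + ((π / 6 : ℝ) : ℂ) * I := by
  have hexp : exp (((-(Real.log 3 / 2) : ℝ) : ℂ) + ((π / 6 : ℝ) : ℂ) * I) = ω := by
    have h3 : Real.exp (Real.log 3 / 2) = √3 := by
      rw [← Real.log_sqrt (by norm_num), Real.exp_log (by positivity)]
    rw [exp_add, exp_mul_I, ← ofReal_exp, ← ofReal_cos, ← ofReal_sin, Real.exp_neg, h3,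
      Real.cos_pi_div_six, Real.sin_pi_div_six, ω]
    have : (√3 : ℝ) ≠ 0 := by positivity
    push_cast
    field_simp
    linear_combination (-2 * I) * ofReal_sqrt_three_sq
  rw [← hexp, log_exp] <;> simp only [add_im, ofReal_im, mul_im, I_re, I_im, ofReal_re] <;>
    linarith [Real.pi_pos]

lemma arg_ω : ω.arg = π / 6 := by
  rw [← log_im, log_ω]; simp only [add_im, ofReal_im, mul_im, I_re, I_im, ofReal_re]; ring

lemma ξ₀_mul_cpow : ξ₀ * ω ^ (-θ) * conj ω ^ (-conj θ) = 1 := by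
  have harg : ω.arg ≠ π := by rw [arg_ω]; linarith [Real.pi_pos]
  have hω : ω ≠ 0 := fun h => by
    have := arg_ω; rw [h, arg_zero] at this; linarith [Real.pi_pos]
  have hξ₀ : ξ₀ = exp (((-(Real.log 3 / 2) : ℝ) : ℂ) - ((π * √3 / 6 : ℝ) : ℂ)) := by
    rw [ξ₀, exp_sub, ← ofReal_exp, Real.exp_neg, ← Real.log_sqrt (by norm_num),
      Real.exp_log (by positivity), exp_neg, div_eq_mul_inv]
    ring
  rw [cpow_def_of_ne_zero hω, cpow_def_of_ne_zero ((map_ne_zero _).mpr hω), log_conj _ harg,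
    hξ₀, ← exp_add, ← exp_add, log_ω, conj_θ]
  refine (congrArg exp ?_).trans exp_zero
  simp only [θ, map_add, map_mul, conj_I, conj_ofReal]
  push_cast
  linear_combination (-π * √3 / 6 : ℂ) * I_sq

def domain : Set ℂ := {w | w + ω ∈ slitPlane ∧ w + conj ω ∈ slitPlane}

lemma isOpen_domain : IsOpen domain :=
  ((isOpen_slitPlane.preimage (by fun_prop)).inter (isOpen_slitPlane.preimage (by fun_prop)))

lemma zero_mem_domain : (0 : ℂ) ∈ domain := by
  have h : 0 < ω.re := by simp [ω]
  refine ⟨?_, ?_⟩ <;> simpa [mem_slitPlane_iff] using Or.inl h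

noncomputable def G (w : ℂ) : ℂ := w * (w + ω) ^ (-θ) * (w + conj ω) ^ (-conj θ)

lemma analyticAt_G {w : ℂ} (hw : w ∈ domain) : AnalyticAt ℂ G w :=
  (analyticAt_id.mul ((analyticAt_id.add analyticAt_const).cpow analyticAt_const hw.1)).mul
    ((analyticAt_id.add analyticAt_const).cpow analyticAt_const hw.2)

/-- `G' = G / (w (1 + 3w + 3w²))`, with the factor `w` cancelled so that it also holds at `0`. -/
lemma hasDerivAt_G {w : ℂ} (hw : w ∈ domain) :
    HasDerivAt G ((w + ω) ^ (-θ) * (w + conj ω) ^ (-conj θ) / (1 + 3 * w + 3 * w ^ 2)) w := by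
  have ha : w + ω ≠ 0 := slitPlane_ne_zero hw.1
  have hb : w + conj ω ≠ 0 := slitPlane_ne_zero hw.2
  have hA := ((hasDerivAt_id' w).add_const ω).cpow_const (c := -θ) hw.1
  have hB := ((hasDerivAt_id' w).add_const (conj ω)).cpow_const (c := -conj θ) hw.2
  refine (((hasDerivAt_id' w).fun_mul hA).fun_mul hB).congr_deriv ?_
  rw [one_add_three_mul_add_three_mul_sq, cpow_sub _ _ ha, cpow_sub _ _ hb, cpow_one, cpow_one]
  field_simp
  linear_combination (w + ω) ^ (-θ) * (w + conj ω) ^ (-conj θ) * 3 * partial_fractions w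

end AbelImplicit

open AbelImplicit Metric

/-- Implicit solution of `ξ F₀' = F₀(1 + 3F₀ + 3F₀²)` with `F₀(ξ) = ξ + O(ξ²)`.
Complex powers are principal-branch `cpow`s (valid near `F₀ = 0` since `F₀ + ω₀` is near
`ω₀`, away from the branch cut). -/
theorem stmt_9 (F₀ : ℂ → ℂ) (r : ℝ) (hr : 0 < r)
    (hA : AnalyticOnNhd ℂ F₀ (Metric.ball (0:ℂ) r))
    (h0 : F₀ 0 = 0) (h1 : deriv F₀ 0 = 1)
    (hode : ∀ ξ ∈ Metric.ball (0:ℂ) r,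
      ξ * deriv F₀ ξ = F₀ ξ * (1 + 3 * F₀ ξ + 3 * (F₀ ξ) ^ 2)) :
    ∃ r' : ℝ, 0 < r' ∧ ∀ ξ ∈ Metric.ball (0:ℂ) r',
      ξ = (((Real.sqrt 3)⁻¹ : ℝ) : ℂ) * Complex.exp (-(((Real.pi * Real.sqrt 3 / 6 : ℝ)) : ℂ))
            * F₀ ξ
            * (F₀ ξ + ((1/2 : ℂ) + Complex.I * ((Real.sqrt 3 / 6 : ℝ) : ℂ)))
                ^ (-((1/2 : ℂ) + Complex.I * ((Real.sqrt 3 / 2 : ℝ) : ℂ)))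
            * (F₀ ξ + (starRingEnd ℂ) ((1/2 : ℂ) + Complex.I * ((Real.sqrt 3 / 6 : ℝ) : ℂ)))
                ^ (-(starRingEnd ℂ) ((1/2 : ℂ) + Complex.I * ((Real.sqrt 3 / 2 : ℝ) : ℂ))) := by
  set Φ : ℂ → ℂ := fun ξ => ξ₀ * G (F₀ ξ) with hΦ
  have hF : Tendsto F₀ (𝓝 0) (𝓝 0) := by
    simpa [h0] using (hA 0 (mem_ball_self hr)).continuousAt.tendsto
  have hFdom : ∀ᶠ ξ in 𝓝 0, ξ ∈ ball 0 r ∧ F₀ ξ ∈ domain :=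
    Eventually.and (ball_mem_nhds 0 hr) (hF (isOpen_domain.mem_nhds zero_mem_domain))
  have hderiv : ∀ᶠ ξ in 𝓝 0, HasDerivAt Φ (ξ₀ * ((F₀ ξ + ω) ^ (-θ) * (F₀ ξ + conj ω) ^ (-conj θ)
      / (1 + 3 * F₀ ξ + 3 * F₀ ξ ^ 2) * deriv F₀ ξ)) ξ := by
    filter_upwards [hFdom] with ξ ⟨hξ, hFξ⟩
    exact ((hasDerivAt_G hFξ).comp ξ (hA ξ hξ).differentiableAt.hasDerivAt).const_mul ξ₀
  have hΦode : ∀ᶠ ξ in 𝓝 0, ξ * deriv Φ ξ = Φ ξ := by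
    filter_upwards [hderiv, hFdom] with ξ hΦξ ⟨hξ, hFξ⟩
    have hq : 1 + 3 * F₀ ξ + 3 * F₀ ξ ^ 2 ≠ 0 := by
      rw [one_add_three_mul_add_three_mul_sq]
      exact mul_ne_zero three_ne_zero
        (mul_ne_zero (slitPlane_ne_zero hFξ.1) (slitPlane_ne_zero hFξ.2))
    have hF' : ξ * deriv F₀ ξ / (1 + 3 * F₀ ξ + 3 * F₀ ξ ^ 2) = F₀ ξ := by
      rw [hode ξ hξ, mul_div_cancel_right₀ _ hq]
    rw [hΦξ.deriv]
    simp only [hΦ, G]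
    linear_combination ξ₀ * (F₀ ξ + ω) ^ (-θ) * (F₀ ξ + conj ω) ^ (-conj θ) * hF'
  have hΦ0 : deriv Φ 0 = 1 := by
    rw [hderiv.self_of_nhds.deriv, h0, h1]
    simpa [mul_assoc] using ξ₀_mul_cpow
  have hΦa : AnalyticAt ℂ Φ 0 :=
    analyticAt_const.mul ((analyticAt_G zero_mem_domain).comp_of_eq (hA 0 (mem_ball_self hr)) h0)
  obtain ⟨ε, hε, hΦε⟩ := eventually_nhds_iff_ball.mp
    (eventually_eq_deriv_mul_of_mul_deriv_eq hΦa hΦode)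
  refine ⟨ε, hε, fun ξ hξ => ?_⟩
  calc ξ = ξ₀ * G (F₀ ξ) := by simpa [hΦ0] using (hΦε ξ hξ).symm
    _ = _ := by simp only [ξ₀, G, ω, θ]; ring
end

section
/- Let λ ∈ ℂ with λ ∉ ℕ and consider the formal power series equation corresponding to h h' = (λξ^{-1} + d₁ + d₂ξ) h + (−λξ^{-1} + d₃ + d₄ξ), h(0) = 1: there exists a unique formal power series solution h̃ = 1 + ∑_{k≥1} h̃_k ξ^k, and moreover this series has positive radius of convergence, giving a unique solution analytic at ξ = 0 with h(0) = 1. -/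
/-!
Writing `h = ∑ cₙ ξⁿ`, the coefficient of `ξ ^ (n + 1)` in
`ξ h h' = λ (h - 1) + (d₁ ξ + d₂ ξ²) h + d₃ ξ + d₄ ξ²` gives
`(n + 1 - λ) c_{n+1} = d₁ cₙ + d₂ c_{n-1} + … - ∑_{j<n} (n - j) c_{j+1} c_{n-j}`,
which determines the `cₙ` since `λ ∉ ℕ`. As `n / |n - λ|` is bounded, `aₙ = ‖cₙ‖` satisfies
`a_{k+1} ≤ K (a_k + a_{k-1} + ∑_{j<k} a_{j+1} a_{k-j})`, and comparison with the Catalan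
recursion gives `a_{k+1} ≤ ε R^{k+1} C_k ≤ (4R)^{k+1}`: the formal solution converges.

For uniqueness, the difference `w` of two analytic solutions satisfies a linear equation
`ξ w' = φ w` with `φ` continuous and `φ 0 = λ`. If `w ≢ 0`, write `w = ξ^m g` with `g 0 ≠ 0`;
then `(m - φ) g + ξ g' = 0` near `0`, and at `ξ = 0` this forces `λ = m`.
-/

open Finset Filter Metric Topology

theorem catalan_le_catalan_succ (n : ℕ) : catalan n ≤ catalan (n + 1) := by
  rw [catalan_succ']
  simpa using single_le_sum (f := fun ij : ℕ × ℕ ↦ catalan ij.1 * catalan ij.2)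
    (fun _ _ ↦ Nat.zero_le _) (a := (n, 0)) (mem_antidiagonal.2 (add_zero n))

theorem catalan_mono : Monotone catalan := monotone_nat_of_le_succ catalan_le_catalan_succ

theorem catalan_le_four_pow (n : ℕ) : catalan n ≤ 4 ^ n := by
  rw [catalan_eq_centralBinom_div]
  exact (Nat.div_le_self _ _).trans n.centralBinom_le_four_pow

theorem sum_range_catalan_mul_catalan_le (k : ℕ) :
    ∑ j ∈ range k, catalan j * catalan (k - 1 - j) ≤ catalan k := by
  cases k with
  | zero => simp
  | succ m => simp [catalan_succ', Nat.sum_antidiagonal_eq_sum_range_succ_mk]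

theorem le_mul_pow_mul_catalan_of_le_quadratic_recursion {a : ℕ → ℝ} {K : ℝ} (hK : 1 ≤ K)
    (ha : ∀ n, 0 ≤ a n) (ha0 : a 0 ≤ 1)
    (hrec : ∀ k, a (k + 1) ≤ K * (a k + a (k - 1) + ∑ j ∈ range k, a (j + 1) * a (k - j)))
    (k : ℕ) : a (k + 1) ≤ (2 * K)⁻¹ * (8 * K ^ 2) ^ (k + 1) * catalan k := by
  -- `ε` and `R` are chosen so that `K * (2 + ε ^ 2 * R) = ε * R`
  set ε := (2 * K)⁻¹ with hε_def
  set R := 8 * K ^ 2 with hR_def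
  clear_value ε R
  have hε : ε ≤ 1 := hε_def ▸ inv_le_one_of_one_le₀ (by linarith)
  have hε0 : 0 ≤ ε := hε_def ▸ by positivity
  have hR : 1 ≤ R := by nlinarith
  have hR0 : 0 < R := by linarith
  induction k using Nat.strong_induction_on with
  | _ k ih =>
  have hlin : ∀ m ≤ k, a m ≤ R ^ k * catalan k := by
    rintro (_ | i) hi
    · calc a 0 ≤ 1 * 1 := by simpa using ha0
        _ ≤ R ^ k * catalan k := by
          gcongr
          · exact one_le_pow₀ hR
          · exact_mod_cast (catalan_zero ▸ catalan_mono (Nat.zero_le k) : 1 ≤ catalan k)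
    · calc a (i + 1) ≤ ε * R ^ (i + 1) * catalan i := ih i (by omega)
        _ ≤ 1 * R ^ k * catalan k := by
          gcongr
          exact_mod_cast catalan_mono (by omega)
        _ = R ^ k * catalan k := by rw [one_mul]
  have hquad : ∑ j ∈ range k, a (j + 1) * a (k - j) ≤ ε ^ 2 * R ^ (k + 1) * catalan k := by
    calc ∑ j ∈ range k, a (j + 1) * a (k - j)
        ≤ ∑ j ∈ range k, (ε * R ^ (j + 1) * catalan j) *
            (ε * R ^ (k - 1 - j + 1) * catalan (k - 1 - j)) := by
          refine sum_le_sum fun j hj ↦ mul_le_mul (ih j (mem_range.1 hj)) ?_ (ha _) (by positivity)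
          have hjk := mem_range.1 hj
          rw [show k - j = k - 1 - j + 1 by omega]
          exact ih _ (by omega)
      _ = ε ^ 2 * R ^ (k + 1) * ∑ j ∈ range k, (catalan j * catalan (k - 1 - j) : ℝ) := by
          rw [mul_sum]
          refine sum_congr rfl fun j hj ↦ ?_
          rw [show k + 1 = (j + 1) + (k - 1 - j + 1) by have := mem_range.1 hj; omega, pow_add]
          ring
      _ ≤ ε ^ 2 * R ^ (k + 1) * catalan k := by
          gcongr
          exact_mod_cast sum_range_catalan_mul_catalan_le k
  calc a (k + 1) ≤ K * (a k + a (k - 1) + ∑ j ∈ range k, a (j + 1) * a (k - j)) := hrec k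
    _ ≤ K * (R ^ k * catalan k + R ^ k * catalan k + ε ^ 2 * R ^ (k + 1) * catalan k) := by
        gcongr
        exacts [hlin k le_rfl, hlin (k - 1) (Nat.sub_le k 1)]
    _ = ε * R ^ (k + 1) * catalan k := by
        rw [hε_def, hR_def]
        field_simp
        ring

theorem exists_forall_le_pow_of_le_quadratic_recursion {a : ℕ → ℝ} {K : ℝ} (hK : 1 ≤ K)
    (ha : ∀ n, 0 ≤ a n) (ha0 : a 0 ≤ 1)
    (hrec : ∀ k, a (k + 1) ≤ K * (a k + a (k - 1) + ∑ j ∈ range k, a (j + 1) * a (k - j))) :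
    ∃ R, 0 < R ∧ ∀ n, a n ≤ R ^ n := by
  refine ⟨4 * (8 * K ^ 2), by positivity, fun n ↦ ?_⟩
  cases n with
  | zero => simpa using ha0
  | succ k =>
    calc a (k + 1) ≤ (2 * K)⁻¹ * (8 * K ^ 2) ^ (k + 1) * catalan k :=
          le_mul_pow_mul_catalan_of_le_quadratic_recursion hK ha ha0 hrec k
      _ ≤ 1 * (8 * K ^ 2) ^ (k + 1) * 4 ^ (k + 1) := by
          gcongr
          · exact inv_le_one_of_one_le₀ (by linarith)
          · calc (catalan k : ℝ) ≤ 4 ^ k := by exact_mod_cast catalan_le_four_pow k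
              _ ≤ 4 ^ (k + 1) := pow_le_pow_right₀ (by norm_num) (Nat.le_succ k)
      _ = (4 * (8 * K ^ 2)) ^ (k + 1) := by rw [mul_pow (4 : ℝ), one_mul, mul_comm]

section PowerSeries

variable {c : ℕ → ℂ} {R ρ : ℝ}

theorem norm_mul_pow_le (hc : ∀ n, ‖c n‖ ≤ R ^ n) {z : ℂ} (hz : ‖z‖ ≤ ρ) (n : ℕ) :
    ‖c n * z ^ n‖ ≤ (R * ρ) ^ n := by
  rw [norm_mul, norm_pow, mul_pow]
  exact mul_le_mul (hc n) (pow_le_pow_left₀ (norm_nonneg _) hz n) (by positivity)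
    ((norm_nonneg _).trans (hc n))

theorem nonneg_of_norm_le_pow (hc : ∀ n, ‖c n‖ ≤ R ^ n) : 0 ≤ R := by
  simpa using (norm_nonneg _).trans (hc 1)

theorem summable_norm_mul_pow (hc : ∀ n, ‖c n‖ ≤ R ^ n) {z : ℂ} (hz : R * ‖z‖ < 1) :
    Summable fun n ↦ ‖c n * z ^ n‖ :=
  (summable_geometric_of_lt_one (mul_nonneg (nonneg_of_norm_le_pow hc) (norm_nonneg z))
    hz).of_nonneg_of_le (fun _ ↦ norm_nonneg _) (norm_mul_pow_le hc le_rfl)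

theorem summable_norm_succ_mul_mul_pow (hc : ∀ n, ‖c n‖ ≤ R ^ n) {z : ℂ} (hz : R * ‖z‖ < 1) :
    Summable fun n : ℕ ↦ ‖((n : ℂ) + 1) * c (n + 1) * z ^ n‖ := by
  have hR := nonneg_of_norm_le_pow hc
  have hq : ‖R * ‖z‖‖ < 1 := by rwa [Real.norm_of_nonneg (by positivity)]
  have hsum : Summable fun n : ℕ ↦ R * ((n + 1) * (R * ‖z‖) ^ n) :=
    (((summable_pow_mul_geometric_of_norm_lt_one 1 hq).add
      (summable_geometric_of_norm_lt_one hq)).mul_left R).congr fun n ↦ by ring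
  refine hsum.of_nonneg_of_le (fun _ ↦ norm_nonneg _) fun n ↦ ?_
  rw [norm_mul, norm_mul, norm_pow,
    show ‖(n : ℂ) + 1‖ = n + 1 by exact_mod_cast Complex.norm_natCast (n + 1)]
  calc (n + 1) * ‖c (n + 1)‖ * ‖z‖ ^ n ≤ (n + 1) * R ^ (n + 1) * ‖z‖ ^ n := by gcongr; exact hc _
    _ = R * ((n + 1) * (R * ‖z‖) ^ n) := by ring

theorem differentiableOn_tsum_mul_pow (hc : ∀ n, ‖c n‖ ≤ R ^ n) (hρ : 0 ≤ ρ) (hRρ : R * ρ < 1) :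
    DifferentiableOn ℂ (fun z ↦ ∑' n, c n * z ^ n) (ball 0 ρ) :=
  Complex.differentiableOn_tsum_of_summable_norm
    (summable_geometric_of_lt_one (mul_nonneg (nonneg_of_norm_le_pow hc) hρ) hRρ)
    (fun _ ↦ by fun_prop) isOpen_ball fun n _ hz ↦ norm_mul_pow_le hc (mem_ball_zero_iff.1 hz).le n

theorem hasSum_deriv_tsum_mul_pow (hc : ∀ n, ‖c n‖ ≤ R ^ n) (hρ : 0 ≤ ρ) (hRρ : R * ρ < 1)
    {z : ℂ} (hz : z ∈ ball 0 ρ) :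
    HasSum (fun n : ℕ ↦ ((n : ℂ) + 1) * c (n + 1) * z ^ n)
      (deriv (fun w ↦ ∑' n, c n * w ^ n) z) := by
  have h := Complex.hasSum_deriv_of_summable_norm (F := fun n w ↦ c n * w ^ n)
    (summable_geometric_of_lt_one (mul_nonneg (nonneg_of_norm_le_pow hc) hρ) hRρ)
    (fun _ ↦ by fun_prop) isOpen_ball
    (fun n _ hw ↦ norm_mul_pow_le hc (mem_ball_zero_iff.1 hw).le n) hz
  have hterm : ∀ n : ℕ, deriv (fun w ↦ c n * w ^ n) z = c n * (n * z ^ (n - 1)) := fun n ↦ by simp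
  have h' := (hasSum_nat_add_iff' 1).mpr h
  rw [sum_range_one, hterm 0, Nat.cast_zero, zero_mul, mul_zero, sub_zero] at h'
  exact h'.congr_fun fun n ↦ by rw [hterm, Nat.add_sub_cancel]; push_cast; ring

end PowerSeries

noncomputable def odeCoeff (lam d₁ d₂ d₃ d₄ : ℂ) : ℕ → ℂ
  | 0 => 1
  | n + 1 => ((n + 1 : ℂ) - lam)⁻¹ *
      (d₁ * odeCoeff lam d₁ d₂ d₃ d₄ n
        + (if n = 0 then d₃ else d₂ * odeCoeff lam d₁ d₂ d₃ d₄ (n - 1))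
        + (if n = 1 then d₄ else 0)
        - ∑ j : Fin n, ((n - j : ℕ) : ℂ) * odeCoeff lam d₁ d₂ d₃ d₄ (j + 1)
            * odeCoeff lam d₁ d₂ d₃ d₄ (n - j))

def forcingCoeff (d₁ d₂ d₃ d₄ : ℂ) (c : ℕ → ℂ) (n : ℕ) : ℂ :=
  d₁ * c n + (if n = 0 then d₃ else d₂ * c (n - 1)) + (if n = 1 then d₄ else 0)

noncomputable def odeSolution (lam d₁ d₂ d₃ d₄ : ℂ) (z : ℂ) : ℂ :=
  ∑' n, odeCoeff lam d₁ d₂ d₃ d₄ n * z ^ n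

section Forcing

variable (d₁ d₂ d₃ d₄ : ℂ) {c : ℕ → ℂ}

theorem norm_forcingCoeff_le (hc0 : c 0 = 1) (n : ℕ) :
    ‖forcingCoeff d₁ d₂ d₃ d₄ c n‖
      ≤ (‖d₁‖ + ‖d₂‖ + ‖d₃‖ + ‖d₄‖) * (‖c n‖ + ‖c (n - 1)‖) := by
  have h₂₃ : ‖if n = 0 then d₃ else d₂ * c (n - 1)‖ ≤ (‖d₂‖ + ‖d₃‖) * ‖c (n - 1)‖ := by
    split_ifs with hn
    · simp [hn, hc0]
    · rw [norm_mul]; gcongr; simp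
  have h₄ : ‖if n = 1 then d₄ else 0‖ ≤ ‖d₄‖ * ‖c (n - 1)‖ := by
    split_ifs with hn
    · simp [hn, hc0]
    · rw [norm_zero]; positivity
  calc ‖forcingCoeff d₁ d₂ d₃ d₄ c n‖
      ≤ ‖d₁ * c n‖ + ‖if n = 0 then d₃ else d₂ * c (n - 1)‖ + ‖if n = 1 then d₄ else 0‖ :=
        norm_add₃_le
    _ ≤ ‖d₁‖ * ‖c n‖ + (‖d₂‖ + ‖d₃‖) * ‖c (n - 1)‖ + ‖d₄‖ * ‖c (n - 1)‖ := by
        rw [norm_mul]; gcongr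
    _ ≤ _ := by
        nlinarith [mul_nonneg (norm_nonneg d₁) (norm_nonneg (c (n - 1))),
          mul_nonneg (by positivity : 0 ≤ ‖d₂‖ + ‖d₃‖ + ‖d₄‖) (norm_nonneg (c n))]

theorem hasSum_forcingCoeff_mul_pow {z s : ℂ} (hc : HasSum (fun n ↦ c n * z ^ n) s) :
    HasSum (fun n ↦ forcingCoeff d₁ d₂ d₃ d₄ c n * z ^ (n + 1))
      ((d₁ * z + d₂ * z ^ 2) * s + d₃ * z + d₄ * z ^ 2) := by
  have h₁ : HasSum (fun n ↦ d₁ * c n * z ^ (n + 1)) (d₁ * z * s) :=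
    (hc.mul_left (d₁ * z)).congr_fun fun n ↦ by ring
  have h₂₃ : HasSum (fun n ↦ (if n = 0 then d₃ else d₂ * c (n - 1)) * z ^ (n + 1))
      (d₂ * z ^ 2 * s + d₃ * z) := by
    refine (hasSum_nat_add_iff' 1).mp ?_
    rw [sum_range_one, if_pos rfl, zero_add, pow_one, add_sub_cancel_right]
    exact (hc.mul_left (d₂ * z ^ 2)).congr_fun fun n ↦ by
      rw [if_neg n.succ_ne_zero, Nat.add_sub_cancel]; ring
  have h₄ : HasSum (fun n ↦ (if n = 1 then d₄ else 0) * z ^ (n + 1)) (d₄ * z ^ 2) :=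
    (hasSum_ite_eq 1 (d₄ * z ^ 2)).congr_fun fun n ↦ by split_ifs with hn <;> simp [hn]
  convert ((h₁.add h₂₃).add h₄).congr_fun (g := fun n ↦ forcingCoeff d₁ d₂ d₃ d₄ c n * z ^ (n + 1))
    (fun n ↦ by simp only [forcingCoeff]; ring) using 1
  ring

end Forcing

section Coefficients

variable (lam d₁ d₂ d₃ d₄ : ℂ)

local notation "c" => odeCoeff lam d₁ d₂ d₃ d₄
local notation "h" => odeSolution lam d₁ d₂ d₃ d₄

@[simp]
theorem odeCoeff_zero : c 0 = 1 := by
  rw [odeCoeff]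

theorem odeCoeff_succ (n : ℕ) :
    c (n + 1) = ((n + 1 : ℂ) - lam)⁻¹ * (forcingCoeff d₁ d₂ d₃ d₄ c n
      - ∑ j ∈ range n, ((n - j : ℕ) : ℂ) * c (j + 1) * c (n - j)) := by
  rw [odeCoeff, Fin.sum_univ_eq_sum_range (fun j ↦ ((n - j : ℕ) : ℂ) * c (j + 1) * c (n - j))]
  rfl

/-- The coefficient of `ξ ^ n` in `h h' = λ (h - 1) / ξ + (d₁ + d₂ ξ) h + d₃ + d₄ ξ`. -/
theorem sum_range_odeCoeff_mul {n : ℕ} (hn : lam ≠ n + 1) :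
    ∑ k ∈ range (n + 1), c k * (((n - k : ℕ) + 1 : ℂ) * c (n - k + 1))
      = lam * c (n + 1) + forcingCoeff d₁ d₂ d₃ d₄ c n := by
  have hne : (n + 1 : ℂ) - lam ≠ 0 := sub_ne_zero.2 hn.symm
  have hrec := odeCoeff_succ lam d₁ d₂ d₃ d₄ n
  rw [eq_inv_mul_iff_mul_eq₀ hne] at hrec
  have hsum : ∀ j ∈ range n, c (j + 1) * (((n - (j + 1) : ℕ) + 1 : ℂ) * c (n - (j + 1) + 1))
      = ((n - j : ℕ) : ℂ) * c (j + 1) * c (n - j) := by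
    intro j hj
    have hj := mem_range.1 hj
    rw [show n - (j + 1) + 1 = n - j by omega, Nat.cast_sub (by omega : j + 1 ≤ n),
      Nat.cast_sub hj.le]
    push_cast
    ring
  rw [sum_range_succ', sum_congr rfl hsum]
  simp only [odeCoeff_zero, Nat.sub_zero, one_mul]
  linear_combination hrec

theorem exists_bound_natCast_div_natCast_sub : ∃ B, ∀ n : ℕ, ‖(n : ℂ) / (n - lam)‖ ≤ B := by
  obtain ⟨B, hB⟩ := (tendsto_natCast_div_add_atTop (-lam)).norm.bddAbove_range
  exact ⟨B, fun n ↦ hB ⟨n, by simp [sub_eq_add_neg]⟩⟩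

theorem norm_odeCoeff_succ_le {B : ℝ} (hB : ∀ n : ℕ, ‖(n : ℂ) / (n - lam)‖ ≤ B) (k : ℕ) :
    ‖c (k + 1)‖ ≤ B * ((‖d₁‖ + ‖d₂‖ + ‖d₃‖ + ‖d₄‖) * (‖c k‖ + ‖c (k - 1)‖)
      + ∑ j ∈ range k, ‖c (j + 1)‖ * ‖c (k - j)‖) := by
  set q := ‖((k + 1 : ℂ) - lam)⁻¹‖
  have hqB : (k + 1) * q ≤ B := by
    have := hB (k + 1)
    rw [norm_div, Complex.norm_natCast, div_eq_mul_inv, ← norm_inv] at this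
    push_cast at this
    exact this
  have hq : q ≤ B := le_trans (le_mul_of_one_le_left (norm_nonneg _) (by linarith)) hqB
  have hsum : q * ‖∑ j ∈ range k, ((k - j : ℕ) : ℂ) * c (j + 1) * c (k - j)‖
      ≤ B * ∑ j ∈ range k, ‖c (j + 1)‖ * ‖c (k - j)‖ := by
    rw [mul_sum]
    refine (mul_le_mul_of_nonneg_left (norm_sum_le _ _) (norm_nonneg _)).trans ?_
    rw [mul_sum]
    refine sum_le_sum fun j hj ↦ ?_
    rw [norm_mul, norm_mul, Complex.norm_natCast]
    calc q * (((k - j : ℕ) : ℝ) * ‖c (j + 1)‖ * ‖c (k - j)‖)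
        = (((k - j : ℕ) : ℝ) * q) * (‖c (j + 1)‖ * ‖c (k - j)‖) := by ring
      _ ≤ B * (‖c (j + 1)‖ * ‖c (k - j)‖) := by
        gcongr
        calc ((k - j : ℕ) : ℝ) * q ≤ (k + 1) * q := by
              gcongr
              exact_mod_cast (Nat.sub_le k j).trans k.le_succ
          _ ≤ B := hqB
  rw [odeCoeff_succ, norm_mul]
  calc q * ‖forcingCoeff d₁ d₂ d₃ d₄ c k - ∑ j ∈ range k, ((k - j : ℕ) : ℂ) * c (j + 1) * c (k - j)‖
      ≤ q * ‖forcingCoeff d₁ d₂ d₃ d₄ c k‖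
        + q * ‖∑ j ∈ range k, ((k - j : ℕ) : ℂ) * c (j + 1) * c (k - j)‖ := by
        rw [← mul_add]; gcongr; exact norm_sub_le _ _
    _ ≤ B * ((‖d₁‖ + ‖d₂‖ + ‖d₃‖ + ‖d₄‖) * (‖c k‖ + ‖c (k - 1)‖))
        + B * ∑ j ∈ range k, ‖c (j + 1)‖ * ‖c (k - j)‖ :=
        add_le_add (mul_le_mul hq (norm_forcingCoeff_le d₁ d₂ d₃ d₄ (odeCoeff_zero ..) k)
          (norm_nonneg _) ((norm_nonneg _).trans hq)) hsum
    _ = _ := (mul_add _ _ _).symm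

theorem exists_norm_odeCoeff_le_pow : ∃ R, 0 < R ∧ ∀ n, ‖c n‖ ≤ R ^ n := by
  obtain ⟨B, hB⟩ := exists_bound_natCast_div_natCast_sub lam
  have hB0 : 0 ≤ B := (norm_nonneg _).trans (hB 0)
  have hD0 : 0 ≤ ‖d₁‖ + ‖d₂‖ + ‖d₃‖ + ‖d₄‖ := by positivity
  refine exists_forall_le_pow_of_le_quadratic_recursion
    (K := (B + 1) * (‖d₁‖ + ‖d₂‖ + ‖d₃‖ + ‖d₄‖ + 1)) (by nlinarith) (fun _ ↦ norm_nonneg _)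
    (by simp) fun k ↦ (norm_odeCoeff_succ_le lam d₁ d₂ d₃ d₄ hB k).trans ?_
  have hX : 0 ≤ ‖c k‖ + ‖c (k - 1)‖ := by positivity
  have hS : 0 ≤ ∑ j ∈ range k, ‖c (j + 1)‖ * ‖c (k - j)‖ := by positivity
  nlinarith [mul_nonneg hB0 hX, mul_nonneg hB0 hS, mul_nonneg hD0 hX, mul_nonneg hD0 hS,
    mul_nonneg (mul_nonneg hB0 hD0) hX, mul_nonneg (mul_nonneg hB0 hD0) hS]


theorem odeSolution_zero : h 0 = 1 := by
  rw [odeSolution, tsum_eq_single 0 fun n hn ↦ by simp [hn]]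
  simp

theorem odeSolution_mul_deriv (hlam : ∀ n : ℕ, lam ≠ n + 1) {R ρ : ℝ}
    (hc : ∀ n, ‖c n‖ ≤ R ^ n) (hρ : 0 ≤ ρ) (hRρ : R * ρ < 1) {z : ℂ} (hz : z ∈ ball 0 ρ)
    (hz0 : z ≠ 0) :
    h z * deriv h z = (lam / z + d₁ + d₂ * z) * h z + (-lam / z + d₃ + d₄ * z) := by
  have hzR : R * ‖z‖ < 1 :=
    (mul_le_mul_of_nonneg_left (mem_ball_zero_iff.1 hz).le (nonneg_of_norm_le_pow hc)).trans_lt hRρ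
  have hsum : HasSum (fun n ↦ c n * z ^ n) (h z) := (summable_norm_mul_pow hc hzR).of_norm.hasSum
  have hprod := hasSum_sum_range_mul_of_summable_norm (summable_norm_mul_pow hc hzR)
    (summable_norm_succ_mul_mul_pow hc hzR)
  rw [(hasSum_deriv_tsum_mul_pow hc hρ hRρ hz).tsum_eq] at hprod
  have hcoeff : ∀ n, ∑ k ∈ range (n + 1),
        c k * z ^ k * ((((n - k : ℕ) : ℂ) + 1) * c (n - k + 1) * z ^ (n - k))
      = (lam * c (n + 1) + forcingCoeff d₁ d₂ d₃ d₄ c n) * z ^ n := by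
    intro n
    rw [← sum_range_odeCoeff_mul lam d₁ d₂ d₃ d₄ (hlam n), sum_mul]
    refine sum_congr rfl fun k hk ↦ ?_
    rw [← Nat.add_sub_of_le (Nat.lt_succ_iff.1 (mem_range.1 hk)), pow_add]
    simp only [Nat.add_sub_cancel_left]
    ring
  have hlhs : HasSum (fun n ↦ (lam * c (n + 1) + forcingCoeff d₁ d₂ d₃ d₄ c n) * z ^ (n + 1))
      (z * (h z * deriv h z)) :=
    (hprod.mul_left z).congr_fun fun n ↦ by rw [hcoeff, pow_succ]; ring
  have hshift : HasSum (fun n ↦ lam * (c (n + 1) * z ^ (n + 1))) (lam * (h z - 1)) := by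
    have := (hasSum_nat_add_iff' 1).mpr hsum
    rw [sum_range_one, odeCoeff_zero, pow_zero, mul_one] at this
    exact this.mul_left lam
  have hrhs := hshift.add (hasSum_forcingCoeff_mul_pow d₁ d₂ d₃ d₄ hsum)
  have key := hlhs.unique (hrhs.congr_fun fun n ↦ by ring)
  field_simp
  linear_combination key

end Coefficients

theorem eventuallyEq_zero_of_mul_deriv_eq {u φ : ℂ → ℂ} (hu : AnalyticAt ℂ u 0)
    (hφ : ContinuousAt φ 0) (hφ0 : ∀ m : ℕ, φ 0 ≠ m)
    (hode : ∀ᶠ z in 𝓝[≠] 0, z * deriv u z = φ z * u z) : u =ᶠ[𝓝 0] 0 := by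
  by_contra hne
  obtain ⟨m, g, hg, hg0, hug⟩ := hu.exists_eventuallyEq_pow_smul_nonzero_iff.2 hne
  simp only [sub_zero, smul_eq_mul] at hug
  have hderiv : ∀ᶠ z in 𝓝 0, deriv u z = m * z ^ (m - 1) * g z + z ^ m * deriv g z := by
    filter_upwards [(show u =ᶠ[𝓝 0] fun z ↦ z ^ m * g z from hug).deriv, hg.eventually_analyticAt]
      with z hz hgz
    rw [hz]
    exact ((hasDerivAt_pow m z).mul hgz.differentiableAt.hasDerivAt).deriv
  have hzero : ∀ᶠ z in 𝓝[≠] 0, (m - φ z) * g z + z * deriv g z = 0 := by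
    filter_upwards [hode, nhdsWithin_le_nhds hderiv, nhdsWithin_le_nhds hug, self_mem_nhdsWithin]
      with z hz hdz huz hz0
    rw [hdz, huz] at hz
    have hpow : z * ((m : ℂ) * z ^ (m - 1)) = m * z ^ m := by
      cases m <;> simp [pow_succ]; ring
    apply mul_left_cancel₀ (pow_ne_zero m hz0)
    linear_combination hz - g z * hpow
  have hcont : ContinuousAt (fun z ↦ (m - φ z) * g z + z * deriv g z) 0 := by
    have := hg.continuousAt
    have := hg.deriv.continuousAt
    fun_prop
  have h0 := tendsto_nhds_unique (hcont.tendsto.mono_left nhdsWithin_le_nhds)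
    (tendsto_const_nhds.congr' (hzero.mono fun z hz ↦ hz.symm))
  rw [zero_mul, add_zero, mul_eq_zero, sub_eq_zero] at h0
  exact hφ0 m (h0.resolve_right hg0).symm

theorem eventuallyEq_of_ode (lam d₁ d₂ d₃ d₄ : ℂ) (hlam : ∀ n : ℕ, lam ≠ n) {h₁ h₂ : ℂ → ℂ}
    (ha₁ : AnalyticAt ℂ h₁ 0) (ha₂ : AnalyticAt ℂ h₂ 0) (h₂0 : h₂ 0 = 1)
    (hode₁ : ∀ᶠ z in 𝓝[≠] 0,
      h₁ z * deriv h₁ z = (lam / z + d₁ + d₂ * z) * h₁ z + (-lam / z + d₃ + d₄ * z))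
    (hode₂ : ∀ᶠ z in 𝓝[≠] 0,
      h₂ z * deriv h₂ z = (lam / z + d₁ + d₂ * z) * h₂ z + (-lam / z + d₃ + d₄ * z)) :
    h₂ =ᶠ[𝓝 0] h₁ := by
  have hne : ∀ᶠ z in 𝓝 0, h₂ z ≠ 0 := ha₂.continuousAt.eventually_ne (by simp [h₂0])
  have hcont : ContinuousAt (fun z ↦ (lam + d₁ * z + d₂ * z ^ 2 - z * deriv h₁ z) / h₂ z) 0 := by
    have := ha₁.deriv.continuousAt
    exact ContinuousAt.div (by fun_prop) ha₂.continuousAt (by simp [h₂0])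
  refine (eventuallyEq_zero_of_mul_deriv_eq (ha₂.sub ha₁) hcont (by simpa [h₂0] using hlam) ?_).mono
    fun z hz ↦ sub_eq_zero.1 hz
  filter_upwards [hode₁, hode₂, nhdsWithin_le_nhds ha₁.eventually_analyticAt,
    nhdsWithin_le_nhds ha₂.eventually_analyticAt, nhdsWithin_le_nhds hne, self_mem_nhdsWithin]
    with z e₁ e₂ a₁ a₂ hz (hz0 : z ≠ 0)
  have E₁ : z * (h₁ z * deriv h₁ z)
      = (lam + d₁ * z + d₂ * z ^ 2) * h₁ z + (-lam + d₃ * z + d₄ * z ^ 2) := by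
    rw [e₁]; field_simp
  have E₂ : z * (h₂ z * deriv h₂ z)
      = (lam + d₁ * z + d₂ * z ^ 2) * h₂ z + (-lam + d₃ * z + d₄ * z ^ 2) := by
    rw [e₂]; field_simp
  rw [(a₂.differentiableAt.hasDerivAt.sub a₁.differentiableAt.hasDerivAt).deriv, Pi.sub_apply]
  field_simp
  linear_combination E₂ - E₁

theorem stmt_14 (lam d₁ d₂ d₃ d₄ : ℂ) (hlam : ∀ n : ℕ, lam ≠ (n : ℂ)) :
    ∃ r : ℝ, 0 < r ∧ ∃ h : ℂ → ℂ,
      AnalyticOnNhd ℂ h (Metric.ball (0:ℂ) r) ∧ h 0 = 1 ∧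
      (∀ ξ ∈ Metric.ball (0:ℂ) r, ξ ≠ 0 →
        h ξ * deriv h ξ = (lam / ξ + d₁ + d₂ * ξ) * h ξ + (-lam / ξ + d₃ + d₄ * ξ)) ∧
      ∀ (h' : ℂ → ℂ) (r' : ℝ), 0 < r' →
        AnalyticOnNhd ℂ h' (Metric.ball (0:ℂ) r') → h' 0 = 1 →
        (∀ ξ ∈ Metric.ball (0:ℂ) r', ξ ≠ 0 →
          h' ξ * deriv h' ξ = (lam / ξ + d₁ + d₂ * ξ) * h' ξ + (-lam / ξ + d₃ + d₄ * ξ)) →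
        h' =ᶠ[nhds 0] h := by
  obtain ⟨R, hR, hc⟩ := exists_norm_odeCoeff_le_pow lam d₁ d₂ d₃ d₄
  have hρ : 0 < (2 * R)⁻¹ := by positivity
  have hRρ : R * (2 * R)⁻¹ < 1 := by rw [mul_inv_lt_iff₀ (by positivity)]; linarith
  have hanalytic := (differentiableOn_tsum_mul_pow hc hρ.le hRρ).analyticOnNhd isOpen_ball
  have hode := fun ξ (hξ : ξ ∈ ball 0 (2 * R)⁻¹) ↦ odeSolution_mul_deriv lam d₁ d₂ d₃ d₄
    (fun n ↦ by exact_mod_cast hlam (n + 1)) hc hρ.le hRρ hξ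
  have hpunctured {r : ℝ} (hr : 0 < r) {P : ℂ → Prop} (hP : ∀ ξ ∈ ball 0 r, ξ ≠ 0 → P ξ) :
      ∀ᶠ ξ in 𝓝[≠] 0, P ξ :=
    eventually_nhdsWithin_iff.2 (eventually_of_mem (ball_mem_nhds 0 hr) hP)
  refine ⟨(2 * R)⁻¹, hρ, odeSolution lam d₁ d₂ d₃ d₄, hanalytic, odeSolution_zero .., hode,
    fun h' r' hr' ha' h'0 hode' ↦ ?_⟩
  exact eventuallyEq_of_ode lam d₁ d₂ d₃ d₄ hlam (hanalytic 0 (mem_ball_self hρ))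
    (ha' 0 (mem_ball_self hr')) h'0 (hpunctured hρ hode) (hpunctured hr' hode')
end
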